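/- arXiv:2508.06247 — 4 statements merged into one kernel-verified Lean document; each statement's English description precedes it below -/
import Mathlib

section
/- Let $X_1, X_2, \ldots$ be i.i.d. random variables in $[0,1]$ with mean $\mu$, let $\hat\mu_{t} = \frac{1}{t}\sum_{s=1}^t X_s$ and $\rho_{t} = \sqrt{\frac{1}{t}\ln^+\left(\frac{1}{\delta t}\right)}$ where $\ln^+(x) = \ln\max\{1, x\}$ and $\delta > 0$. Define $\zeta = \max\left(0, \mu - \min_{t \leq T}(\hat\mu_{t} + \rho_{t})\right)$. Then for any $\varepsilon > 0$, $\Pr[\zeta \geq \varepsilon] \leq \frac{4\delta}{\varepsilon^2}$. -/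
/-!
Peeling over dyadic blocks. Put `S t = ∑_{s<t} (μ - X s)` and, for `n = 2 ^ j`,
`a n = n ε / 2 + √(n ln⁺ (1 / (δ n)) / 2)`. If some `t ≤ T` has `ε ≤ μ - (μ̂ t + ρ t)`, choose
`j = ⌊log₂ t⌋ + 1`, so that `t ≤ n ≤ 2t`; since `ln⁺ (1 / (δ t))` decreases in `t`, this gives
`S t = t (μ - μ̂ t) ≥ t (ε + ρ t) ≥ a n`. Doob's maximal inequality for the submartingale
`exp (λ S t)` and Hoeffding's lemma bound the probability that `S t ≥ a n` for some `t ≤ n` by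
`exp (-2 (a n)² / n) ≤ δ n e^{-2x}` with `x = n ε² / 4`, i.e. by `(4δ/ε²) x e^{-2x}`, which is at
most `(4δ/ε²) (e^{-x} - e^{-2x})`. Doubling `n` doubles `x`, so the sum over the blocks
telescopes to at most `4δ/ε²`.
-/

open MeasureTheory ProbabilityTheory Real Finset
open scoped NNReal

namespace Real

lemma mul_exp_neg_two_mul_le (x : ℝ) : x * exp (-(2 * x)) ≤ exp (-x) - exp (-(2 * x)) :=
  calc x * exp (-(2 * x)) ≤ (exp x - 1) * exp (-(2 * x)) := by
        gcongr
        linarith [add_one_le_exp x]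
    _ = exp (-x) - exp (-(2 * x)) := by rw [sub_mul, ← exp_add]; ring_nf

lemma exp_neg_log_max_one_one_div_le {y : ℝ} (hy : 0 < y) : exp (-log (max 1 (1 / y))) ≤ y := by
  rw [exp_neg, exp_log (by positivity), inv_le_comm₀ (by positivity) hy, ← one_div]
  exact le_max_right _ _

end Real

noncomputable def blockThreshold (δ ε n : ℝ) : ℝ :=
  n * ε / 2 + √(n * log (max 1 (1 / (δ * n))) / 2)

lemma exp_neg_two_mul_blockThreshold_sq_div_le {δ ε n : ℝ} (hδ : 0 < δ) (hε : 0 < ε) (hn : 0 < n) :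
    exp (-2 * blockThreshold δ ε n ^ 2 / n) ≤
      4 * δ / ε ^ 2 * (exp (-(n * ε ^ 2 / 4)) - exp (-(2 * (n * ε ^ 2 / 4)))) := by
  set L := log (max 1 (1 / (δ * n)))
  have hL : 0 ≤ L := log_nonneg (le_max_left _ _)
  have hsq : (n * ε / 2) ^ 2 + n * L / 2 ≤ blockThreshold δ ε n ^ 2 := by
    show _ ≤ (n * ε / 2 + √(n * L / 2)) ^ 2
    have : 0 ≤ n * ε / 2 * √(n * L / 2) := by positivity
    rw [add_sq, sq_sqrt (by positivity)]
    linarith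
  calc exp (-2 * blockThreshold δ ε n ^ 2 / n) ≤ exp (-L) * exp (-(2 * (n * ε ^ 2 / 4))) := by
        rw [← exp_add, exp_le_exp, div_le_iff₀ hn]
        nlinarith
    _ ≤ δ * n * exp (-(2 * (n * ε ^ 2 / 4))) := by
        gcongr
        exact exp_neg_log_max_one_one_div_le (by positivity)
    _ = 4 * δ / ε ^ 2 * ((n * ε ^ 2 / 4) * exp (-(2 * (n * ε ^ 2 / 4)))) := by
        field_simp
    _ ≤ 4 * δ / ε ^ 2 * (exp (-(n * ε ^ 2 / 4)) - exp (-(2 * (n * ε ^ 2 / 4)))) := by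
        gcongr
        exact mul_exp_neg_two_mul_le _

lemma blockThreshold_le_sum_sub {δ ε μ n : ℝ} (hδ : 0 < δ) (hε : 0 ≤ ε) {x : ℕ → ℝ} {t : ℕ}
    (ht : 0 < t) (htn : t ≤ n) (hnt : n ≤ 2 * t)
    (h : ε ≤ μ - ((∑ s ∈ range t, x s) / t + √(1 / t * log (max 1 (1 / (δ * t)))))) :
    blockThreshold δ ε n ≤ ∑ s ∈ range t, (μ - x s) := by
  replace ht : (0 : ℝ) < t := Nat.cast_pos.2 ht
  set Lt := log (max 1 (1 / (δ * t)))
  have hL : log (max 1 (1 / (δ * n))) ≤ Lt :=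
    log_le_log (by positivity) (max_le_max le_rfl (one_div_le_one_div_of_le (by positivity)
      (by gcongr)))
  have hbonus : √(n * log (max 1 (1 / (δ * n))) / 2) ≤ t * √(1 / t * Lt) := by
    rw [← sqrt_sq ht.le, ← sqrt_mul (sq_nonneg _), sqrt_sq ht.le]
    gcongr
    calc n * log (max 1 (1 / (δ * n))) / 2 ≤ t * Lt := by
          nlinarith [log_nonneg (le_max_left 1 (1 / (δ * n)))]
      _ = t ^ 2 * (1 / t * Lt) := by field_simp
  calc blockThreshold δ ε n ≤ t * ε + t * √(1 / t * Lt) := by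
        rw [blockThreshold]
        gcongr
        nlinarith
    _ ≤ t * (μ - (∑ s ∈ range t, x s) / t) := by rw [← mul_add]; gcongr; linarith
    _ = ∑ s ∈ range t, (μ - x s) := by
        rw [sum_sub_distrib, sum_const, card_range, nsmul_eq_mul]
        field_simp

lemma exists_blockThreshold_le_sum_sub {δ ε μ : ℝ} (hδ : 0 < δ) (hε : 0 ≤ ε) {x : ℕ → ℝ}
    {t T : ℕ} (ht : 1 ≤ t) (htT : t ≤ T)
    (h : ε ≤ μ - ((∑ s ∈ range t, x s) / t + √(1 / t * log (max 1 (1 / (δ * t)))))) :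
    ∃ j < Nat.log 2 T + 2, ∃ s < 2 ^ j,
      blockThreshold δ ε (2 ^ j : ℕ) ≤ ∑ i ∈ range (s + 1), (μ - x i) := by
  have hlt : t < 2 ^ (Nat.log 2 t + 1) := Nat.lt_pow_succ_log_self one_lt_two t
  have hle : 2 ^ (Nat.log 2 t + 1) ≤ 2 * t := by
    rw [pow_succ']
    exact Nat.mul_le_mul_left 2 (Nat.pow_log_le_self 2 (by omega))
  refine ⟨Nat.log 2 t + 1, by have := Nat.log_mono_right (b := 2) htT; omega, t - 1, by omega, ?_⟩
  rw [Nat.sub_add_cancel ht]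
  exact blockThreshold_le_sum_sub hδ hε ht (by exact_mod_cast hlt.le) (by exact_mod_cast hle) h

namespace ProbabilityTheory

variable {Ω : Type*} {mΩ : MeasurableSpace Ω} {P : Measure Ω} [IsProbabilityMeasure P]

lemma one_le_integral_exp_mul_of_integral_eq_zero {Y : Ω → ℝ} {l : ℝ} (hY : Integrable Y P)
    (hexp : Integrable (fun ω ↦ exp (l * Y ω)) P) (hzero : P[Y] = 0) :
    1 ≤ P[fun ω ↦ exp (l * Y ω)] :=
  calc (1 : ℝ) = P[fun ω ↦ 1 + l * Y ω] := by
        rw [integral_add (integrable_const 1) (hY.const_mul l), integral_const_mul, hzero]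
        simp
    _ ≤ P[fun ω ↦ exp (l * Y ω)] :=
        integral_mono ((integrable_const 1).add (hY.const_mul l)) hexp
          fun ω ↦ by linarith [add_one_le_exp (l * Y ω)]

variable {Y : ℕ → Ω → ℝ} {c : ℝ≥0}

-- Summing up to `t + 1` makes the process adapted to the natural filtration `σ(Y 0, …, Y t)`.
lemma submartingale_exp_mul_sum_range (hY : iIndepFun Y P) (hmeas : ∀ i, Measurable (Y i))
    (hsubG : ∀ i, HasSubgaussianMGF (Y i) c P) (hzero : ∀ i, P[Y i] = 0) (l : ℝ) :
    Submartingale (fun t ω ↦ exp (l * ∑ i ∈ range (t + 1), Y i ω))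
      (Filtration.natural Y fun i ↦ (hmeas i).stronglyMeasurable) P := by
  set 𝓕 := Filtration.natural Y fun i ↦ (hmeas i).stronglyMeasurable
  have hadapted : StronglyAdapted 𝓕 fun t ω ↦ exp (l * ∑ i ∈ range (t + 1), Y i ω) := by
    intro t
    refine ((Finset.measurable_sum _ fun i hi ↦ ?_).const_mul l).exp.stronglyMeasurable
    exact (comap_measurable (Y i)).mono
      (le_biSup (fun j ↦ MeasurableSpace.comap (Y j) _) (Nat.lt_succ_iff.1 (mem_range.1 hi))) le_rfl
  have hint (t : ℕ) : Integrable (fun ω ↦ exp (l * ∑ i ∈ range (t + 1), Y i ω)) P :=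
    (HasSubgaussianMGF.sum_of_iIndepFun hY fun i _ ↦ hsubG i).integrable_exp_mul l
  refine submartingale_nat hadapted hint fun t ↦ ?_
  have hsplit : (fun ω ↦ exp (l * ∑ i ∈ range (t + 1 + 1), Y i ω)) =
      (fun ω ↦ exp (l * ∑ i ∈ range (t + 1), Y i ω)) * fun ω ↦ exp (l * Y (t + 1) ω) := by
    ext ω
    simp only [Pi.mul_apply, sum_range_succ _ (t + 1), mul_add, exp_add]
  have hpull := condExp_mul_of_stronglyMeasurable_left (m := 𝓕 t) (hadapted t)
    (hsplit ▸ hint (t + 1)) ((hsubG (t + 1)).integrable_exp_mul l)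
  have hindep : P[fun ω ↦ exp (l * Y (t + 1) ω) | 𝓕 t] =ᵐ[P]
      fun _ ↦ P[fun ω ↦ exp (l * Y (t + 1) ω)] :=
    condExp_indep_eq (hmeas (t + 1)).comap_le (𝓕.le t)
      ((comap_measurable (Y (t + 1))).const_mul l).exp.stronglyMeasurable
      (hY.indep_comap_natural_of_lt _ t.lt_succ_self)
  have hone := one_le_integral_exp_mul_of_integral_eq_zero (hsubG (t + 1)).integrable
    ((hsubG (t + 1)).integrable_exp_mul l) (hzero (t + 1))
  simp only [hsplit]
  filter_upwards [hpull, hindep] with ω hω hω'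
  rw [hω, Pi.mul_apply, hω']
  exact le_mul_of_one_le_right (exp_pos _).le hone

lemma measureReal_exists_le_sum_range_le_exp_add (hY : iIndepFun Y P)
    (hmeas : ∀ i, Measurable (Y i)) (hsubG : ∀ i, HasSubgaussianMGF (Y i) c P)
    (hzero : ∀ i, P[Y i] = 0) (n : ℕ) (a : ℝ) {l : ℝ} (hl : 0 ≤ l) :
    P.real {ω | ∃ t < n, a ≤ ∑ i ∈ range (t + 1), Y i ω} ≤ exp (-l * a + n * c * l ^ 2 / 2) := by
  obtain _ | m := n
  · simpa using (exp_pos _).le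
  set f : ℕ → Ω → ℝ := fun t ω ↦ exp (l * ∑ i ∈ range (t + 1), Y i ω)
  set r : ℝ≥0 := (exp (l * a)).toNNReal
  have hr : (r : ℝ) = exp (l * a) := coe_toNNReal _ (exp_pos _).le
  set B := {ω | (r : ℝ) ≤ (range (m + 1)).sup' nonempty_range_add_one fun k ↦ f k ω}
  have hsub : {ω | ∃ t < m + 1, a ≤ ∑ i ∈ range (t + 1), Y i ω} ⊆ B := by
    rintro ω ⟨t, ht, hat⟩
    rw [Set.mem_ofPred_eq, hr]
    exact (exp_le_exp.2 (mul_le_mul_of_nonneg_left hat hl)).trans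
      (le_sup' (fun k ↦ f k ω) (mem_range.2 ht))
  have hsum := HasSubgaussianMGF.sum_of_iIndepFun hY (s := range (m + 1)) fun i _ ↦ hsubG i
  have hdoob := maximal_ineq (submartingale_exp_mul_sum_range hY hmeas hsubG hzero l)
    (fun _ _ ↦ (exp_pos _).le) (ε := r) m
  have hfB : ∫ ω in B, f m ω ∂P ≤ exp ((m + 1) * c * l ^ 2 / 2) := calc
    ∫ ω in B, f m ω ∂P ≤ ∫ ω, f m ω ∂P :=
        setIntegral_le_integral (hsum.integrable_exp_mul l) (ae_of_all _ fun _ ↦ (exp_pos _).le)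
    _ ≤ exp ((m + 1) * c * l ^ 2 / 2) := by
        simpa [mgf, f, sum_const, card_range, nsmul_eq_mul, mul_assoc] using hsum.mgf_le l
  have hB : exp (l * a) * P.real B ≤ exp ((m + 1) * c * l ^ 2 / 2) := by
    rw [← hr, measureReal_def, ← ENNReal.coe_toReal, ← ENNReal.toReal_mul]
    exact (ENNReal.toReal_le_of_le_ofReal (integral_nonneg fun _ ↦ (exp_pos _).le) hdoob).trans hfB
  calc P.real {ω | ∃ t < m + 1, a ≤ ∑ i ∈ range (t + 1), Y i ω} ≤ P.real B := measureReal_mono hsub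
    _ ≤ exp (-l * a) * exp ((m + 1) * c * l ^ 2 / 2) := by
        rw [neg_mul, exp_neg, ← div_eq_inv_mul, le_div_iff₀' (exp_pos _)]
        exact hB
    _ = exp (-l * a + ↑(m + 1) * c * l ^ 2 / 2) := by push_cast; rw [exp_add]

lemma measureReal_exists_le_sum_range_le (hY : iIndepFun Y P)
    (hmeas : ∀ i, Measurable (Y i)) (hsubG : ∀ i, HasSubgaussianMGF (Y i) c P)
    (hzero : ∀ i, P[Y i] = 0) (n : ℕ) {ε : ℝ} (hε : 0 ≤ ε) :
    P.real {ω | ∃ t < n, ε ≤ ∑ i ∈ range (t + 1), Y i ω} ≤ exp (-ε ^ 2 / (2 * n * c)) := by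
  refine (measureReal_exists_le_sum_range_le_exp_add hY hmeas hsubG hzero n ε
    (l := ε / (n * c)) (by positivity)).trans_eq (congrArg exp ?_)
  rcases eq_or_ne ((n : ℝ) * c) 0 with h | h
  · simp [mul_assoc, h]
  · field_simp
    ring

lemma hasSubgaussianMGF_integral_sub_of_mem_Icc {X : Ω → ℝ} {a b : ℝ} (hm : AEMeasurable X P)
    (hb : ∀ᵐ ω ∂P, X ω ∈ Set.Icc a b) :
    HasSubgaussianMGF (fun ω ↦ P[X] - X ω) ((‖b - a‖₊ / 2) ^ 2) P :=
  (hasSubgaussianMGF_of_mem_Icc hm hb).neg.congr (ae_of_all _ fun ω ↦ by simp)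

lemma measureReal_exists_blockThreshold_le_sum_sub {X : ℕ → Ω → ℝ} {μ δ ε : ℝ} (hδ : 0 < δ)
    (hε : 0 < ε) (hindep : iIndepFun X P) (hmeas : ∀ i, Measurable (X i))
    (hbound : ∀ i, ∀ᵐ ω ∂P, X i ω ∈ Set.Icc (0 : ℝ) 1) (hmean : ∀ i, P[X i] = μ) {n : ℕ}
    (hn : 0 < n) :
    P.real {ω | ∃ t < n, blockThreshold δ ε n ≤ ∑ i ∈ range (t + 1), (μ - X i ω)} ≤
      4 * δ / ε ^ 2 * (exp (-(n * ε ^ 2 / 4)) - exp (-(2 * (n * ε ^ 2 / 4)))) := by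
  have hsubG (i : ℕ) : HasSubgaussianMGF (fun ω ↦ μ - X i ω) (1 / 4) P := by
    have h := hasSubgaussianMGF_integral_sub_of_mem_Icc (hmeas i).aemeasurable (hbound i)
    norm_num [hmean i] at h
    exact h
  have hzero (i : ℕ) : P[fun ω ↦ μ - X i ω] = 0 := by
    rw [integral_sub (integrable_const μ) (Integrable.of_mem_Icc 0 1 (hmeas i).aemeasurable
      (hbound i)), hmean i, integral_const, probReal_univ, one_smul, sub_self]
  have hthr : 0 ≤ blockThreshold δ ε n := by unfold blockThreshold; positivity
  calc P.real {ω | ∃ t < n, blockThreshold δ ε n ≤ ∑ i ∈ range (t + 1), (μ - X i ω)}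
      ≤ exp (-blockThreshold δ ε n ^ 2 / (2 * n * ((1 / 4 : ℝ≥0) : ℝ))) :=
        measureReal_exists_le_sum_range_le (hindep.comp (fun _ x ↦ μ - x) fun _ ↦ by fun_prop)
          (fun i ↦ (hmeas i).const_sub μ) hsubG hzero n hthr
    _ = exp (-2 * blockThreshold δ ε n ^ 2 / n) := by congr 1; push_cast; field_simp; ring
    _ ≤ _ := exp_neg_two_mul_blockThreshold_sq_div_le hδ hε (Nat.cast_pos.2 hn)

end ProbabilityTheory

theorem stmt4_general
    {Ω : Type*} [MeasureSpace Ω] [IsProbabilityMeasure (ℙ : Measure Ω)]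
    (X : ℕ → Ω → ℝ) (μ δ : ℝ) (hδ : 0 < δ) (T : ℕ) (hT : 1 ≤ T)
    (hmeas : ∀ s, Measurable (X s))
    (hindep : iIndepFun X ℙ)
    (hbound : ∀ s, ∀ᵐ ω ∂ℙ, X s ω ∈ Set.Icc (0 : ℝ) 1)
    (hmean : ∀ s, ∫ ω, X s ω ∂ℙ = μ)
    (hatμ : ℕ → Ω → ℝ)
    (hhat : ∀ t ω, hatμ t ω = (∑ s ∈ Finset.range t, X s ω) / t)
    (ρ : ℕ → ℝ)
    (hρ : ∀ t : ℕ, ρ t = Real.sqrt ((1 / t) * Real.log (max 1 (1 / (δ * t)))))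
    (ζ : Ω → ℝ)
    (hζ : ∀ ω, ζ ω = max 0 (μ -
      (Finset.Icc 1 T).inf' (Finset.nonempty_Icc.mpr hT) (fun t => hatμ t ω + ρ t)))
    (ε : ℝ) (hε : 0 < ε) :
    (ℙ {ω | ε ≤ ζ ω}).toReal ≤ 4 * δ / ε ^ 2 := by
  set E : ℕ → ℝ := fun j ↦ exp (-((2 : ℝ) ^ j * ε ^ 2 / 4))
  set A : ℕ → Set Ω := fun j ↦
    {ω | ∃ t < 2 ^ j, blockThreshold δ ε (2 ^ j : ℕ) ≤ ∑ i ∈ range (t + 1), (μ - X i ω)}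
  have hblock (j : ℕ) : (ℙ (A j)).toReal ≤ 4 * δ / ε ^ 2 * (E j - E (j + 1)) := by
    refine (measureReal_exists_blockThreshold_le_sum_sub hδ hε hindep hmeas hbound hmean
      (Nat.two_pow_pos j)).trans_eq ?_
    simp only [E]
    push_cast
    ring_nf
  have hcover : {ω | ε ≤ ζ ω} ⊆ ⋃ j ∈ range (Nat.log 2 T + 2), A j := by
    intro ω hω
    obtain ⟨t, ht, hmin⟩ := exists_mem_eq_inf' (nonempty_Icc.mpr hT) fun t ↦ hatμ t ω + ρ t
    rw [Set.mem_ofPred_eq, hζ ω, hmin, le_max_iff, hhat, hρ] at hω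
    obtain ⟨j, hj, s, hs, hsum⟩ := exists_blockThreshold_le_sum_sub hδ hε.le (mem_Icc.1 ht).1
      (mem_Icc.1 ht).2 (hω.resolve_left hε.not_ge)
    exact Set.mem_iUnion₂.2 ⟨j, mem_range.2 hj, s, hs, hsum⟩
  have hE0 : E 0 ≤ 1 := exp_le_one_iff.2 (by simp only [pow_zero]; nlinarith)
  have hEpos : 0 < E (Nat.log 2 T + 2) := exp_pos _
  calc (ℙ {ω | ε ≤ ζ ω}).toReal ≤ (ℙ (⋃ j ∈ range (Nat.log 2 T + 2), A j)).toReal :=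
        measureReal_mono hcover (measure_ne_top _ _)
    _ ≤ ∑ j ∈ range (Nat.log 2 T + 2), (ℙ (A j)).toReal := measureReal_biUnion_finset_le _ _
    _ ≤ ∑ j ∈ range (Nat.log 2 T + 2), 4 * δ / ε ^ 2 * (E j - E (j + 1)) :=
        sum_le_sum fun j _ ↦ hblock j
    _ = 4 * δ / ε ^ 2 * (E 0 - E (Nat.log 2 T + 2)) := by rw [← mul_sum, sum_range_sub']
    _ ≤ 4 * δ / ε ^ 2 := by
        have : 0 ≤ 4 * δ / ε ^ 2 := by positivity
        nlinarith

/-- MOSS-style underestimation tail bound: for i.i.d. rewards in `[0,1]` with mean `μ`,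
the probability that the UCB ever underestimates `μ` by more than `ε` over horizon `T`
is at most `4δ/ε²`. -/
theorem stmt4
    {Ω : Type*} [MeasureSpace Ω] [IsProbabilityMeasure (ℙ : Measure Ω)]
    (X : ℕ → Ω → ℝ) (μ δ : ℝ) (hδ : 0 < δ) (T : ℕ) (hT : 1 ≤ T)
    (hmeas : ∀ s, Measurable (X s))
    (hindep : iIndepFun X ℙ)
    (hident : ∀ s, Measure.map (X s) ℙ = Measure.map (X 0) ℙ)
    (hbound : ∀ s, ∀ᵐ ω ∂ℙ, X s ω ∈ Set.Icc (0 : ℝ) 1)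
    (hmean : ∀ s, ∫ ω, X s ω ∂ℙ = μ)
    (hatμ : ℕ → Ω → ℝ)
    (hhat : ∀ t ω, hatμ t ω = (∑ s ∈ Finset.range t, X s ω) / t)
    (ρ : ℕ → ℝ)
    (hρ : ∀ t : ℕ, ρ t = Real.sqrt ((1 / t) * Real.log (max 1 (1 / (δ * t)))))
    (ζ : Ω → ℝ)
    (hζ : ∀ ω, ζ ω = max 0 (μ -
      (Finset.Icc 1 T).inf' (Finset.nonempty_Icc.mpr hT) (fun t => hatμ t ω + ρ t)))
    (ε : ℝ) (hε : 0 < ε) :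
    (ℙ {ω | ε ≤ ζ ω}).toReal ≤ 4 * δ / ε ^ 2 :=
  stmt4_general X μ δ hδ T hT hmeas hindep hbound hmean hatμ hhat ρ hρ ζ hζ ε hε
end

section
/- Let $X_1, \ldots, X_n$ be independent random variables in $[0,1]$ with common mean $\mu$, let $\hat\mu_t = \frac{1}{t}\sum_{s=1}^t X_s$. Fix $a > 1$ and $\varepsilon \in (0,1)$, and define $\kappa = \sum_{t=1}^T \mathbb{1}\{\hat\mu_t + \sqrt{a/t} - \mu \geq \varepsilon\}$. Then for any integer $T > 1$, $\mathbb{E}[\kappa] \leq \frac{3a}{\varepsilon^2}$. -/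
/-!
In round `t` the overestimation event is `√t (√t ε - √a) ≤ ∑_{s<t} (X_s - μ)`, so Hoeffding's
inequality bounds its probability by `exp (-2 (√t ε - √a)²)` once `t ≥ a / ε²`, and by `1` before.
The capped bound is antitone in `t`, hence the expected count is at most its integral over
`[0, T]`: the capped part contributes `a / ε²`, and the substitution `t = (v + √a / ε)²` turns the
rest into the Gaussian-type integral `∫₀^∞ 2 (v + √a / ε) exp (-2 ε² v²) dv
= (1/2 + √(π/2) √a) / ε²`, which is at most `2 a / ε²` when `a ≥ 1`.
-/

open MeasureTheory ProbabilityTheory Real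

theorem integral_exp_neg_mul_sq_mul_two_mul_le {b : ℝ} (hb : 0 < b) (D : ℝ) :
    ∫ v in 0..D, rexp (-b * v ^ 2) * (2 * v) ≤ 1 / b := by
  have hderiv : ∀ v ∈ Set.uIcc 0 D,
      HasDerivAt (fun v => rexp (-b * v ^ 2) / -b) (rexp (-b * v ^ 2) * (2 * v)) v := fun v _ =>
    (((hasDerivAt_pow 2 v).const_mul (-b)).exp.div_const (-b)).congr_deriv (by field_simp; ring)
  rw [intervalIntegral.integral_eq_sub_of_hasDerivAt hderiv
    (Continuous.intervalIntegrable (by fun_prop) _ _)]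
  rw [div_neg, div_neg]
  field_simp
  norm_num
  positivity

theorem integral_exp_neg_mul_sq_le {b D : ℝ} (hb : 0 < b) (hD : 0 ≤ D) :
    ∫ v in 0..D, rexp (-b * v ^ 2) ≤ √(π / b) / 2 := by
  rw [← integral_gaussian_Ioi, intervalIntegral.integral_of_le hD]
  exact setIntegral_mono_set (integrable_exp_neg_mul_sq hb).integrableOn
    (ae_of_all _ fun v => (exp_pos _).le) Set.Ioc_subset_Ioi_self.eventuallyLE

theorem integral_exp_neg_mul_sq_mul_two_mul_add_le {b r D : ℝ} (hb : 0 < b) (hr : 0 ≤ r)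
    (hD : 0 ≤ D) :
    ∫ v in 0..D, rexp (-b * v ^ 2) * (2 * (v + r)) ≤ 1 / b + r * √(π / b) := by
  have hsplit : ∫ v in 0..D, rexp (-b * v ^ 2) * (2 * (v + r)) =
      (∫ v in 0..D, rexp (-b * v ^ 2) * (2 * v)) + 2 * r * ∫ v in 0..D, rexp (-b * v ^ 2) := by
    rw [← intervalIntegral.integral_const_mul, ← intervalIntegral.integral_add
      (Continuous.intervalIntegrable (by fun_prop) _ _)
      (Continuous.intervalIntegrable (by fun_prop) _ _)]
    congr 1 with v
    ring
  rw [hsplit]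
  have := integral_exp_neg_mul_sq_le hb hD
  have := integral_exp_neg_mul_sq_mul_two_mul_le hb D
  nlinarith

-- Hoeffding's bound for round `t`, capped at `1` (through `max 0`) where it is vacuous.
noncomputable def overshootBound (a ε x : ℝ) : ℝ := rexp (-2 * max 0 (√x * ε - √a) ^ 2)

section overshootBound

variable {a ε : ℝ}

theorem overshootBound_nonneg (x : ℝ) : 0 ≤ overshootBound a ε x := (exp_pos _).le

@[fun_prop]
theorem continuous_overshootBound : Continuous (overshootBound a ε) := by
  unfold overshootBound; fun_prop

theorem antitone_overshootBound (hε : 0 ≤ ε) : Antitone (overshootBound a ε) := by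
  intro x y hxy
  have hmax : max 0 (√x * ε - √a) ≤ max 0 (√y * ε - √a) := by
    gcongr
  have hsq := pow_le_pow_left₀ (le_max_left _ _) hmax 2
  exact exp_le_exp.2 (by linarith)

theorem overshootBound_eq_one {x : ℝ} (hx : √x * ε ≤ √a) : overshootBound a ε x = 1 := by
  simp [overshootBound, hx]

theorem overshootBound_add_sq (hε : 0 < ε) {v : ℝ} (hv : 0 ≤ v) :
    overshootBound a ε ((v + √a / ε) ^ 2) = rexp (-(2 * ε ^ 2) * v ^ 2) := by
  have hsqrt : √((v + √a / ε) ^ 2) * ε - √a = v * ε := by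
    rw [sqrt_sq (by positivity)]
    field_simp
    ring
  rw [overshootBound, hsqrt, max_eq_right (by positivity)]
  ring_nf

theorem integral_overshootBound_of_le (hε : 0 < ε) :
    ∫ x in 0..(√a / ε) ^ 2, overshootBound a ε x = (√a / ε) ^ 2 := by
  have hone : Set.EqOn (overshootBound a ε) 1 (Set.uIcc 0 ((√a / ε) ^ 2)) := by
    intro x hx
    rw [Set.uIcc_of_le (sq_nonneg _)] at hx
    refine overshootBound_eq_one ?_
    calc √x * ε ≤ √((√a / ε) ^ 2) * ε := by gcongr; exact hx.2
      _ = √a := by rw [sqrt_sq (by positivity)]; field_simp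
  rw [intervalIntegral.integral_congr hone]
  simp

theorem integral_overshootBound_tail_le (hε : 0 < ε) {M : ℝ} (hM : (√a / ε) ^ 2 ≤ M) :
    ∫ x in (√a / ε) ^ 2..M, overshootBound a ε x ≤ (1 / 2 + √(π / 2) * √a) / ε ^ 2 := by
  set r := √a / ε with hr_def
  have hr : 0 ≤ r := by positivity
  have hD : 0 ≤ √M - r := by
    rw [sub_nonneg, ← sqrt_sq hr]
    exact sqrt_le_sqrt hM
  have hsubst := intervalIntegral.integral_comp_mul_deriv (a := 0) (b := √M - r)
    (f := fun v => (v + r) ^ 2) (f' := fun v => 2 * (v + r)) (g := overshootBound a ε)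
    (fun v _ => by simpa using ((hasDerivAt_id v).add_const r).fun_pow 2) (by fun_prop)
    continuous_overshootBound
  simp only [Function.comp_def, zero_add, sub_add_cancel, sq_sqrt ((sq_nonneg r).trans hM)]
    at hsubst
  rw [← hsubst]
  have hgauss : Set.EqOn (fun v => overshootBound a ε ((v + r) ^ 2) * (2 * (v + r)))
      (fun v => rexp (-(2 * ε ^ 2) * v ^ 2) * (2 * (v + r))) (Set.uIcc 0 (√M - r)) := by
    intro v hv
    rw [Set.uIcc_of_le hD] at hv
    simp only [overshootBound_add_sq hε hv.1, r]
  rw [intervalIntegral.integral_congr hgauss]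
  calc _ ≤ 1 / (2 * ε ^ 2) + r * √(π / (2 * ε ^ 2)) :=
        integral_exp_neg_mul_sq_mul_two_mul_add_le (by positivity) hr hD
    _ = (1 / 2 + √(π / 2) * √a) / ε ^ 2 := by
        rw [show π / (2 * ε ^ 2) = π / 2 / ε ^ 2 by ring, sqrt_div' _ (sq_nonneg ε),
          sqrt_sq hε.le, hr_def]
        field_simp

theorem integral_overshootBound_le (hε : 0 < ε) (ha : 0 ≤ a) {B : ℝ} (hB : 0 ≤ B) :
    ∫ x in 0..B, overshootBound a ε x ≤ (a + 1 / 2 + √(π / 2) * √a) / ε ^ 2 := by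
  have hc : (√a / ε) ^ 2 = a / ε ^ 2 := by rw [div_pow, sq_sqrt ha]
  have hint : ∀ u v : ℝ, IntervalIntegrable (overshootBound a ε) volume u v :=
    continuous_overshootBound.intervalIntegrable
  calc ∫ x in 0..B, overshootBound a ε x
      ≤ ∫ x in 0..max B ((√a / ε) ^ 2), overshootBound a ε x :=
        intervalIntegral.integral_mono_interval le_rfl hB (le_max_left _ _)
          (ae_of_all _ overshootBound_nonneg) (hint _ _)
    _ = (√a / ε) ^ 2 + ∫ x in (√a / ε) ^ 2..max B ((√a / ε) ^ 2), overshootBound a ε x := by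
        rw [← intervalIntegral.integral_add_adjacent_intervals (hint _ _) (hint _ _),
          integral_overshootBound_of_le hε]
    _ ≤ a / ε ^ 2 + (1 / 2 + √(π / 2) * √a) / ε ^ 2 :=
        add_le_add hc.le (integral_overshootBound_tail_le hε (le_max_right _ _))
    _ = (a + 1 / 2 + √(π / 2) * √a) / ε ^ 2 := by ring

end overshootBound

theorem AntitoneOn.sum_Icc_le_integral {f : ℝ → ℝ} {T : ℕ} (hf : AntitoneOn f (Set.Icc 0 T)) :
    ∑ t ∈ Finset.Icc 1 T, f t ≤ ∫ x in (0 : ℝ)..T, f x := by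
  have := AntitoneOn.sum_le_integral (x₀ := 0) (a := T) (by simpa using hf)
  simp only [zero_add] at this
  rwa [Finset.range_eq_Ico, Finset.sum_Ico_add' (fun i : ℕ => f (i : ℝ)), zero_add,
    Finset.Ico_add_one_right_eq_Icc] at this

theorem integral_sum_ite_eq_sum_measureReal {Ω ι : Type*} [MeasurableSpace Ω] {P : Measure Ω}
    [IsFiniteMeasure P] (s : Finset ι) {p : ι → Ω → Prop} [∀ i ω, Decidable (p i ω)]
    (hp : ∀ i, MeasurableSet {ω | p i ω}) :
    ∫ ω, ∑ i ∈ s, (if p i ω then (1 : ℝ) else 0) ∂P = ∑ i ∈ s, P.real {ω | p i ω} := by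
  have hind : ∀ i ω, (if p i ω then (1 : ℝ) else 0) = {ω | p i ω}.indicator 1 ω := by
    intro i ω
    simp [Set.indicator_apply]
  simp_rw [hind]
  rw [integral_finsetSum s fun i _ => (integrable_const 1).indicator (hp i)]
  exact Finset.sum_congr rfl fun i _ => integral_indicator_one (hp i)

section Hoeffding

variable {Ω : Type*} [MeasurableSpace Ω] {P : Measure Ω} [IsProbabilityMeasure P]
  {X : ℕ → Ω → ℝ} {μ : ℝ}

theorem measureReal_le_sum_range_sub_le (hmeas : ∀ s, AEMeasurable (X s) P)
    (hindep : iIndepFun X P) (hbound : ∀ s, ∀ᵐ ω ∂P, X s ω ∈ Set.Icc (0 : ℝ) 1)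
    (hmean : ∀ s, ∫ ω, X s ω ∂P = μ) (t : ℕ) {δ : ℝ} (hδ : 0 ≤ δ) :
    P.real {ω | δ ≤ ∑ s ∈ Finset.range t, (X s ω - μ)} ≤ rexp (-2 * δ ^ 2 / t) := by
  have hsubG : ∀ s < t, HasSubgaussianMGF (fun ω => X s ω - μ) ((‖(1 : ℝ) - 0‖₊ / 2) ^ 2) P :=
    fun s _ => hmean s ▸ hasSubgaussianMGF_of_mem_Icc (hmeas s) (hbound s)
  have hindep' : iIndepFun (fun s ω => X s ω - μ) P :=
    hindep.comp (fun _ x => x - μ) fun _ => measurable_id.sub_const μ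
  refine (HasSubgaussianMGF.measure_sum_range_ge_le_of_iIndepFun hindep' hsubG hδ).trans_eq ?_
  congr 1
  norm_num
  ring

theorem measureReal_mean_add_bonus_ge_le (hmeas : ∀ s, AEMeasurable (X s) P)
    (hindep : iIndepFun X P) (hbound : ∀ s, ∀ᵐ ω ∂P, X s ω ∈ Set.Icc (0 : ℝ) 1)
    (hmean : ∀ s, ∫ ω, X s ω ∂P = μ) (a ε : ℝ) (t : ℕ) :
    P.real {ω | ε ≤ (∑ s ∈ Finset.range t, X s ω) / t + √(a / t) - μ} ≤
      overshootBound a ε t := by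
  rcases le_or_gt (√t * ε) √a with hsmall | hsmall
  · rw [overshootBound_eq_one hsmall]
    exact measureReal_le_one
  have ht : (0 : ℝ) < t := by
    by_contra! h
    simp [le_antisymm h t.cast_nonneg] at hsmall
    linarith [sqrt_nonneg a]
  have hevent : {ω | ε ≤ (∑ s ∈ Finset.range t, X s ω) / t + √(a / t) - μ} =
      {ω | √t * (√t * ε - √a) ≤ ∑ s ∈ Finset.range t, (X s ω - μ)} := by
    ext ω
    have hsum : ∑ s ∈ Finset.range t, (X s ω - μ) = (∑ s ∈ Finset.range t, X s ω) - t * μ := by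
      simp [Finset.sum_sub_distrib]
    have hdiff : (∑ s ∈ Finset.range t, X s ω) / t + √(a / t) - μ - ε =
        ((∑ s ∈ Finset.range t, (X s ω - μ)) - √t * (√t * ε - √a)) / t := by
      rw [hsum, sqrt_div' _ t.cast_nonneg]
      field_simp
      linear_combination (√t * ε - √a) * mul_self_sqrt t.cast_nonneg
    rw [Set.mem_ofPred_eq, Set.mem_ofPred_eq, ← sub_nonneg, hdiff, le_div_iff₀ ht, zero_mul,
      sub_nonneg]
  rw [hevent]
  refine (measureReal_le_sum_range_sub_le hmeas hindep hbound hmean t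
    (by positivity)).trans_eq ?_
  rw [overshootBound, max_eq_right (by linarith), mul_pow, sq_sqrt t.cast_nonneg]
  field_simp

end Hoeffding

theorem add_add_sqrt_pi_div_two_mul_sqrt_le {a : ℝ} (ha : 1 ≤ a) :
    a + 1 / 2 + √(π / 2) * √a ≤ 3 * a := by
  have hpi : √(π / 2) ≤ 3 / 2 := by
    rw [sqrt_le_left (by norm_num)]
    linarith [pi_lt_four]
  have hsqrt : √a ≤ a := sqrt_le_self_iff.2 (Or.inr ha)
  nlinarith [sqrt_nonneg (π / 2), sqrt_nonneg a]

theorem stmt7_general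
    {Ω : Type*} [MeasureSpace Ω] [IsProbabilityMeasure (ℙ : Measure Ω)]
    (X : ℕ → Ω → ℝ) (μ : ℝ)
    (hmeas : ∀ s, Measurable (X s))
    (hindep : iIndepFun X ℙ)
    (hbound : ∀ s, ∀ᵐ ω ∂ℙ, X s ω ∈ Set.Icc (0 : ℝ) 1)
    (hmean : ∀ s, ∫ ω, X s ω ∂ℙ = μ)
    (a ε : ℝ) (ha : 1 < a) (hε : ε ∈ Set.Ioo (0 : ℝ) 1)
    (T : ℕ)
    (κ : Ω → ℝ)
    (hκ : ∀ ω, κ ω = ∑ t ∈ Finset.Icc 1 T,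
      if ε ≤ (∑ s ∈ Finset.range t, X s ω) / t + Real.sqrt (a / t) - μ then (1 : ℝ) else 0) :
    ∫ ω, κ ω ∂ℙ ≤ 3 * a / ε ^ 2 := by
  have hevent : ∀ t : ℕ, MeasurableSet
      {ω | ε ≤ (∑ s ∈ Finset.range t, X s ω) / t + √(a / t) - μ} := fun t =>
    measurableSet_le measurable_const (by fun_prop)
  calc ∫ ω, κ ω ∂ℙ
      = ∑ t ∈ Finset.Icc 1 T,
          (ℙ : Measure Ω).real {ω | ε ≤ (∑ s ∈ Finset.range t, X s ω) / t + √(a / t) - μ} := by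
        simp_rw [hκ]
        exact integral_sum_ite_eq_sum_measureReal _ hevent
    _ ≤ ∑ t ∈ Finset.Icc 1 T, overshootBound a ε t := Finset.sum_le_sum fun t _ =>
        measureReal_mean_add_bonus_ge_le (fun s => (hmeas s).aemeasurable) hindep hbound hmean
          a ε t
    _ ≤ ∫ x in 0..T, overshootBound a ε x :=
        ((antitone_overshootBound hε.1.le).antitoneOn _).sum_Icc_le_integral
    _ ≤ (a + 1 / 2 + √(π / 2) * √a) / ε ^ 2 :=
        integral_overshootBound_le hε.1 (by linarith) T.cast_nonneg
    _ ≤ 3 * a / ε ^ 2 := by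
        gcongr
        exact add_add_sqrt_pi_div_two_mul_sqrt_le ha.le

/-- Expected overestimation count: for independent rewards in `[0,1]` with common mean
`μ`, the expected number of rounds `t ≤ T` where the empirical mean plus bonus `√(a/t)`
overestimates `μ` by at least `ε` is at most `3a/ε²`. -/
theorem stmt7
    {Ω : Type*} [MeasureSpace Ω] [IsProbabilityMeasure (ℙ : Measure Ω)]
    (X : ℕ → Ω → ℝ) (μ : ℝ)
    (hmeas : ∀ s, Measurable (X s))
    (hindep : iIndepFun X ℙ)
    (hbound : ∀ s, ∀ᵐ ω ∂ℙ, X s ω ∈ Set.Icc (0 : ℝ) 1)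
    (hmean : ∀ s, ∫ ω, X s ω ∂ℙ = μ)
    (a ε : ℝ) (ha : 1 < a) (hε : ε ∈ Set.Ioo (0 : ℝ) 1)
    (T : ℕ) (hT : 1 < T)
    (κ : Ω → ℝ)
    (hκ : ∀ ω, κ ω = ∑ t ∈ Finset.Icc 1 T,
      if ε ≤ (∑ s ∈ Finset.range t, X s ω) / t + Real.sqrt (a / t) - μ then (1 : ℝ) else 0) :
    ∫ ω, κ ω ∂ℙ ≤ 3 * a / ε ^ 2 :=
  stmt7_general X μ hmeas hindep hbound hmean a ε ha hε T κ hκ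
end

section
/- Let $k_A \geq 1$ be an integer and let $\mu_1 \leq \mu_2 \leq \cdots \leq \mu_{k_A}$ be reals in $[0,1]$ with average $\bar\mu = \frac{1}{k_A}\sum_{i=1}^{k_A} \mu_i$. Let $\Delta > 0$ and define $D = \{i \in [k_A] : \mu_i \leq \bar\mu + \frac{3\Delta}{4 k_A}\}$. If $|D| \leq \lfloor k_A/2 \rfloor$, then there exists $1 \leq \ell \leq \lfloor \log_2 k_A \rfloor$ such that $\bar\mu - \mu_{\lfloor k_A/2^{\ell} \rfloor} \geq \frac{(\sqrt{2})^{\ell}}{16}\cdot\frac{\Delta}{k_A}$. -/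
/-!
Write `f i = bar - μ i` for the deficit of arm `i`; it is antitone and sums to zero over all arms.
If at most `⌊k/2⌋` arms lie below `bar + 3Δ/(4k)`, the top `k - ⌊k/2⌋` arms each exceed `bar` by
that much, so the deficits of the bottom `⌊k/2⌋` arms add up to at least `3Δ/8`. Conversely, if
`f(⌊k/2^ℓ⌋) < (√2)^ℓ Δ/(16k)` for every `ℓ ≤ log₂ k`, cut `[1, ⌊k/2⌋]` into the dyadic blocks
`(⌊k/2^(ℓ+1)⌋, ⌊k/2^ℓ⌋]` plus the arm `1 = ⌊k/2^(log₂ k)⌋`: block `ℓ` has at most `k/2^ℓ` arms,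
each with deficit below `(√2)^(ℓ+1) Δ/(16k)`, and the resulting geometric series bounds the total
deficit by `(3 + √2) Δ/16 < 3Δ/8`.
-/

open Finset

section Average

variable {μ : ℕ → ℝ} {k n : ℕ} {bar c t : ℝ}

lemma sum_Icc_average_sub_eq_sum_Ioc (hbar : bar = (∑ i ∈ Icc 1 k, μ i) / k) (hn : n ≤ k) :
    ∑ i ∈ Icc 1 n, (bar - μ i) = ∑ i ∈ Ioc n k, (μ i - bar) := by
  have hzero : ∑ i ∈ Ioc 0 k, (μ i - bar) = 0 := by
    rcases Nat.eq_zero_or_pos k with rfl | hk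
    · simp
    rw [sum_sub_distrib, sum_const, Nat.card_Ioc, Nat.sub_zero, nsmul_eq_mul, hbar,
      ← Icc_add_one_left_eq_Ioc, zero_add]
    field_simp
    ring
  rw [← sum_Ioc_consecutive _ (Nat.zero_le n) hn, ← Icc_add_one_left_eq_Ioc, zero_add] at hzero
  have hneg : ∑ i ∈ Icc 1 n, (bar - μ i) = -∑ i ∈ Icc 1 n, (μ i - bar) := by
    rw [← sum_neg_distrib]
    simp
  linarith

lemma lt_of_card_filter_le (hμ : MonotoneOn μ (Set.Icc 1 k))
    (hc : #{i ∈ Icc 1 k | μ i ≤ c} ≤ n) {i : ℕ} (hi : i ∈ Ioc n k) : c < μ i := by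
  rw [mem_Ioc] at hi
  by_contra! hμi
  have hsub : Icc 1 i ⊆ {j ∈ Icc 1 k | μ j ≤ c} := fun j hj => by
    rw [mem_Icc] at hj
    rw [mem_filter, mem_Icc]
    exact ⟨⟨hj.1, hj.2.trans hi.2⟩,
      (hμ ⟨hj.1, hj.2.trans hi.2⟩ ⟨hj.1.trans hj.2, hi.2⟩ hj.2).trans hμi⟩
  have := card_le_card hsub
  simp only [Nat.card_Icc, add_tsub_cancel_right] at this
  omega

lemma mul_div_two_le_sum_Icc_half (hμ : MonotoneOn μ (Set.Icc 1 k))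
    (hbar : bar = (∑ i ∈ Icc 1 k, μ i) / k) (ht : 0 ≤ t)
    (hD : #{i ∈ Icc 1 k | μ i ≤ bar + t} ≤ k / 2) :
    k * t / 2 ≤ ∑ i ∈ Icc 1 (k / 2), (bar - μ i) := by
  rw [sum_Icc_average_sub_eq_sum_Ioc hbar (Nat.div_le_self k 2)]
  have hcard : (k : ℝ) / 2 ≤ #(Ioc (k / 2) k) := by
    rw [Nat.card_Ioc, div_le_iff₀ two_pos]
    exact_mod_cast (by omega : k ≤ (k - k / 2) * 2)
  calc k * t / 2 = k / 2 * t := by ring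
    _ ≤ #(Ioc (k / 2) k) * t := by gcongr
    _ ≤ ∑ i ∈ Ioc (k / 2) k, (μ i - bar) := by
      rw [← nsmul_eq_mul]
      refine card_nsmul_le_sum _ _ _ fun i hi => ?_
      linarith [lt_of_card_filter_le hμ hD hi]

end Average

section Dyadic

variable {f : ℕ → ℝ} {k : ℕ}

lemma sum_Icc_le_sum_Icc_add_mul (hf : AntitoneOn f (Set.Icc 1 k)) {a b : ℕ}
    (ha : 1 ≤ a) (hab : a ≤ b) (hb : b ≤ k) :
    ∑ i ∈ Icc 1 b, f i ≤ ∑ i ∈ Icc 1 a, f i + (b - a : ℕ) * f a := by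
  have hsplit := sum_Ioc_consecutive f (Nat.zero_le a) hab
  rw [← Icc_add_one_left_eq_Ioc 0 a, ← Icc_add_one_left_eq_Ioc 0 b, zero_add] at hsplit
  have hblock : ∑ i ∈ Ioc a b, f i ≤ (b - a : ℕ) * f a := by
    rw [← Nat.card_Ioc, ← nsmul_eq_mul]
    refine sum_le_card_nsmul _ _ _ fun i hi => ?_
    rw [mem_Ioc] at hi
    exact hf ⟨ha, hab.trans hb⟩ ⟨ha.trans hi.1.le, hi.2.trans hb⟩ hi.1.le
  linarith

lemma sum_Icc_div_two_pow_le (hf : AntitoneOn f (Set.Icc 1 k)) {m n : ℕ} (hmn : m ≤ n)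
    (hn : 2 ^ n ≤ k) :
    ∑ i ∈ Icc 1 (k / 2 ^ m), f i ≤ ∑ i ∈ Icc 1 (k / 2 ^ n), f i +
      ∑ ℓ ∈ Ico m n, (k / 2 ^ ℓ - k / 2 ^ (ℓ + 1) : ℕ) * f (k / 2 ^ (ℓ + 1)) := by
  induction n, hmn using Nat.le_induction with
  | base => simp
  | succ n hmn ih =>
    have hn' : 2 ^ n ≤ k := le_trans (Nat.pow_le_pow_right two_pos n.le_succ) hn
    have hstep := sum_Icc_le_sum_Icc_add_mul hf ((Nat.one_le_div_iff (by positivity)).2 hn)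
      (Nat.div_le_div_left (Nat.pow_le_pow_right two_pos n.le_succ) (by positivity))
      (Nat.div_le_self k (2 ^ n))
    rw [sum_Ico_succ_top hmn]
    linarith [ih hn']

lemma div_two_pow_log_eq_one (hk : k ≠ 0) : k / 2 ^ Nat.log 2 k = 1 := by
  have h1 := Nat.pow_log_le_self 2 hk
  have h2 := Nat.lt_pow_succ_log_self one_lt_two k
  rw [pow_succ] at h2
  have : 1 ≤ k / 2 ^ Nat.log 2 k := (Nat.one_le_div_iff (by positivity)).2 h1
  have : k / 2 ^ Nat.log 2 k < 2 := (Nat.div_lt_iff_lt_mul (by positivity)).2 (by linarith)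
  omega

lemma sum_Icc_half_le_of_le_geom (hf : AntitoneOn f (Set.Icc 1 k)) {r a : ℝ}
    (hr0 : 0 ≤ r) (hr2 : r < 2) (ha : 0 ≤ a)
    (h : ∀ ℓ, 1 ≤ ℓ → ℓ ≤ Nat.log 2 k → f (k / 2 ^ ℓ) ≤ r ^ ℓ * a) :
    ∑ i ∈ Icc 1 (k / 2), f i ≤ k * a * (1 + r ^ 2 / (2 - r)) := by
  have hr2' : 0 < 2 - r := by linarith
  rcases lt_or_ge k 2 with hk | hk
  · rw [Nat.div_eq_of_lt hk, Icc_eq_empty (by norm_num), sum_empty]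
    positivity
  set L := Nat.log 2 k
  have hL : 1 ≤ L := Nat.log_pos one_lt_two hk
  have hpowL : 2 ^ L ≤ k := Nat.pow_log_le_self 2 (by omega)
  have htele := sum_Icc_div_two_pow_le hf hL hpowL
  rw [pow_one, div_two_pow_log_eq_one (by omega), Icc_self, sum_singleton] at htele
  have hfirst : f 1 ≤ k * a := calc
    f 1 = f (k / 2 ^ L) := by rw [div_two_pow_log_eq_one (by omega)]
    _ ≤ r ^ L * a := h L hL le_rfl
    _ ≤ 2 ^ L * a := by gcongr
    _ ≤ k * a := by gcongr; exact_mod_cast hpowL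
  have hblock : ∀ ℓ ∈ Ico 1 L,
      (k / 2 ^ ℓ - k / 2 ^ (ℓ + 1) : ℕ) * f (k / 2 ^ (ℓ + 1)) ≤ k * a * r * (r / 2) ^ ℓ := by
    intro ℓ hℓ
    rw [mem_Ico] at hℓ
    have hcard : ((k / 2 ^ ℓ - k / 2 ^ (ℓ + 1) : ℕ) : ℝ) ≤ k / 2 ^ ℓ :=
      (Nat.cast_le.2 (Nat.sub_le _ _)).trans (by exact_mod_cast Nat.cast_div_le)
    calc ((k / 2 ^ ℓ - k / 2 ^ (ℓ + 1) : ℕ) : ℝ) * f (k / 2 ^ (ℓ + 1))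
        ≤ (k / 2 ^ ℓ - k / 2 ^ (ℓ + 1) : ℕ) * (r ^ (ℓ + 1) * a) := by
          gcongr
          exact h (ℓ + 1) (by omega) hℓ.2
      _ ≤ k / 2 ^ ℓ * (r ^ (ℓ + 1) * a) := by gcongr
      _ = k * a * r * (r / 2) ^ ℓ := by rw [div_pow]; ring
  have hgeom : ∑ ℓ ∈ Ico 1 L, (r / 2) ^ ℓ ≤ r / 2 / (1 - r / 2) := by
    simpa using geom_sum_Ico_le_of_lt_one (m := 1) (n := L) (by positivity) (by linarith)
  calc ∑ i ∈ Icc 1 (k / 2), f i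
      ≤ f 1 + ∑ ℓ ∈ Ico 1 L, (k / 2 ^ ℓ - k / 2 ^ (ℓ + 1) : ℕ) * f (k / 2 ^ (ℓ + 1)) := htele
    _ ≤ k * a + k * a * r * ∑ ℓ ∈ Ico 1 L, (r / 2) ^ ℓ := by
      rw [mul_sum]
      exact add_le_add hfirst (sum_le_sum hblock)
    _ ≤ k * a + k * a * r * (r / 2 / (1 - r / 2)) := by gcongr
    _ = k * a * (1 + r ^ 2 / (2 - r)) := by field_simp

end Dyadic

theorem stmt9_general (k : ℕ) (hk : 1 ≤ k) (μ : ℕ → ℝ)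
    (hmono : ∀ i ∈ Finset.Icc 1 k, ∀ j ∈ Finset.Icc 1 k, i ≤ j → μ i ≤ μ j)
    (Δ : ℝ) (hΔ : 0 < Δ)
    (bar : ℝ) (hbar : bar = (∑ i ∈ Finset.Icc 1 k, μ i) / k)
    (hD : ((Finset.Icc 1 k).filter (fun i => μ i ≤ bar + 3 * Δ / (4 * k))).card ≤ k / 2) :
    ∃ ℓ : ℕ, 1 ≤ ℓ ∧ ℓ ≤ Nat.log 2 k ∧
      bar - μ (k / 2 ^ ℓ) ≥ (Real.sqrt 2) ^ ℓ / 16 * (Δ / k) := by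
  by_contra! hsmall
  have hk0 : (k : ℝ) ≠ 0 := by positivity
  have hμ : MonotoneOn μ (Set.Icc 1 k) := fun i hi j hj hij =>
    hmono i (mem_Icc.2 hi) j (mem_Icc.2 hj) hij
  have hsqrt : Real.sqrt 2 < 8 / 5 := by
    rw [Real.sqrt_lt' (by norm_num)]
    norm_num
  have hlower := mul_div_two_le_sum_Icc_half hμ hbar (by positivity) hD
  have hupper := sum_Icc_half_le_of_le_geom (f := fun i => bar - μ i) (a := Δ / (16 * k))
    (fun i hi j hj hij => sub_le_sub_left (hμ hi hj hij) bar) (Real.sqrt_nonneg 2)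
    (by linarith) (by positivity) fun ℓ h1 h2 => (hsmall ℓ h1 h2).le.trans_eq (by ring)
  have hconst : 2 / (2 - Real.sqrt 2) < 5 := by
    rw [div_lt_iff₀ (by linarith)]
    linarith
  refine lt_irrefl (3 * Δ / 8) ?_
  calc 3 * Δ / 8 = k * (3 * Δ / (4 * k)) / 2 := by field_simp; ring
    _ ≤ ∑ i ∈ Icc 1 (k / 2), (bar - μ i) := hlower
    _ ≤ k * (Δ / (16 * k)) * (1 + Real.sqrt 2 ^ 2 / (2 - Real.sqrt 2)) := hupper
    _ = Δ / 16 * (1 + 2 / (2 - Real.sqrt 2)) := by rw [Real.sq_sqrt zero_le_two]; field_simp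
    _ < Δ / 16 * (1 + 5) := by gcongr
    _ = 3 * Δ / 8 := by ring

/-- Action-partitioning lemma: if few arms of a suboptimal action are near the average,
then some dyadic quantile arm is far below the average. -/
theorem stmt9 (k : ℕ) (hk : 1 ≤ k) (μ : ℕ → ℝ)
    (hmono : ∀ i ∈ Finset.Icc 1 k, ∀ j ∈ Finset.Icc 1 k, i ≤ j → μ i ≤ μ j)
    (hrange : ∀ i ∈ Finset.Icc 1 k, μ i ∈ Set.Icc (0 : ℝ) 1)
    (Δ : ℝ) (hΔ : 0 < Δ)
    (bar : ℝ) (hbar : bar = (∑ i ∈ Finset.Icc 1 k, μ i) / k)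
    (hD : ((Finset.Icc 1 k).filter (fun i => μ i ≤ bar + 3 * Δ / (4 * k))).card ≤ k / 2) :
    ∃ ℓ : ℕ, 1 ≤ ℓ ∧ ℓ ≤ Nat.log 2 k ∧
      bar - μ (k / 2 ^ ℓ) ≥ (Real.sqrt 2) ^ ℓ / 16 * (Δ / k) :=
  stmt9_general k hk μ hmono Δ hΔ bar hbar hD
end

section
/- Let $k_A \geq 1$ be an integer and $\Delta > 0$. Suppose $\mu_1 \leq \cdots \leq \mu_{k_A}$ are reals with average $\bar\mu$ such that $\bar\mu - \mu_{\lfloor k_A/2^{\ell}\rfloor} < \frac{(\sqrt{2})^{\ell}}{16}\cdot\frac{\Delta}{k_A}$ for all $1 \leq \ell \leq \lfloor \log_2 k_A \rfloor$. Then $\sum_{i=1}^{\lfloor k_A/2 \rfloor}(\bar\mu - \mu_i) < \frac{\Delta}{8} + \frac{(\sqrt{2}+1)\Delta}{16\sqrt{k_A}} < \frac{3\Delta}{8}$ when $k_A \geq 2$. -/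
/-!
For `1 ≤ i ≤ k / 2` take `ℓ = log₂ (k / (i + 1)) + 1`: then `k / 2 ^ ℓ ≤ i` and `2 ^ ℓ i ≤ 2 k`, so
monotonicity and the quantile hypothesis give `bar - μ i < √2 Δ / (16 √(k i))`. Summing with
`∑_{i ≤ n} i^{-1/2} ≤ 2 √n` at `n = k / 2` bounds the lower-half sum by `Δ / 8` already.
-/

open Finset Real

lemma sum_Icc_inv_sqrt_le (n : ℕ) : ∑ i ∈ Icc 1 n, (√i)⁻¹ ≤ 2 * √n := by
  induction n with
  | zero => simp
  | succ n ih =>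
    rw [sum_Icc_succ_top (by omega), Nat.cast_succ]
    have hpos : 0 < √(n + 1 : ℝ) := sqrt_pos.mpr (by positivity)
    -- `1 / √(n+1) ≤ 2 (√(n+1) - √n)` is `(√(n+1) - √n)² ≥ 0`
    have hstep : (√(n + 1 : ℝ))⁻¹ ≤ 2 * √(n + 1 : ℝ) - 2 * √n := by
      rw [inv_le_iff_one_le_mul₀' hpos]
      nlinarith [sq_nonneg (√n - √(n + 1 : ℝ)), sq_sqrt (Nat.cast_nonneg n : (0 : ℝ) ≤ n),
        sq_sqrt (by positivity : (0 : ℝ) ≤ n + 1)]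
    linarith

lemma sqrt_two_pow_mul_sqrt_le {x y : ℝ} {ℓ : ℕ} (h : 2 ^ ℓ * y ≤ 2 * x) :
    √2 ^ ℓ * √y ≤ √2 * √x := by
  have h2 : √2 ^ ℓ = √(2 ^ ℓ) := by
    rw [← sqrt_sq (by positivity : 0 ≤ √2 ^ ℓ), ← pow_mul, mul_comm, pow_mul, sq_sqrt zero_le_two]
  rw [h2, ← sqrt_mul (by positivity), ← sqrt_mul zero_le_two]
  exact sqrt_le_sqrt h

lemma Nat.exists_div_two_pow_le_and_two_pow_mul_le {k i : ℕ} (hi : 1 ≤ i) (hik : i ≤ k / 2) :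
    ∃ ℓ, 1 ≤ ℓ ∧ ℓ ≤ Nat.log 2 k ∧ k / 2 ^ ℓ ≤ i ∧ 2 ^ ℓ * i ≤ 2 * k := by
  set m := k / (i + 1)
  have hm : 1 ≤ m := (Nat.one_le_div_iff (by omega)).mpr (by omega)
  refine ⟨Nat.log 2 m + 1, le_add_self, ?_, ?_, ?_⟩
  · have : Nat.log 2 m ≤ Nat.log 2 (k / 2) :=
      Nat.log_mono_right (Nat.div_le_div_left (by omega) (by omega))
    have := Nat.log_div_base 2 k
    have := Nat.log_pos one_lt_two (show 2 ≤ k by omega)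
    omega
  · have hlt : m < 2 ^ (Nat.log 2 m + 1) := Nat.lt_pow_succ_log_self one_lt_two m
    have : k < (i + 1) * 2 ^ (Nat.log 2 m + 1) := by
      have := Nat.lt_mul_div_succ k (show 0 < i + 1 by omega)
      calc k < (i + 1) * (m + 1) := this
        _ ≤ _ := Nat.mul_le_mul_left _ hlt
    have := (Nat.div_lt_iff_lt_mul (by positivity)).mpr this
    omega
  · have hpow : 2 ^ Nat.log 2 m ≤ m := Nat.pow_log_le_self 2 (by omega)
    have hmi : m * i ≤ k := (Nat.mul_le_mul_left m (Nat.le_succ i)).trans (Nat.div_mul_le_self k _)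
    calc 2 ^ (Nat.log 2 m + 1) * i = 2 * (2 ^ Nat.log 2 m * i) := by ring
      _ ≤ 2 * k := Nat.mul_le_mul_left 2 ((Nat.mul_le_mul_right i hpow).trans hmi)

lemma sqrt_two_pow_div_le {k i : ℕ} {ℓ : ℕ} {Δ : ℝ} (hΔ : 0 ≤ Δ) (hi : 1 ≤ i)
    (h : 2 ^ ℓ * i ≤ 2 * k) :
    √2 ^ ℓ / 16 * (Δ / k) ≤ √2 * Δ / (16 * √k) / √i := by
  have hk : (0 : ℝ) < k := by exact_mod_cast (show 0 < k by nlinarith [Nat.one_le_two_pow (n := ℓ)])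
  have hi' : (0 : ℝ) < √i := sqrt_pos.mpr (by exact_mod_cast hi)
  have hmain := sqrt_two_pow_mul_sqrt_le (x := k) (y := i) (ℓ := ℓ) (by exact_mod_cast h)
  have hkk : √(k : ℝ) * √k = k := mul_self_sqrt hk.le
  rw [div_mul_div_comm, div_div, div_le_div_iff₀ (by positivity) (by positivity)]
  calc √2 ^ ℓ * Δ * (16 * √k * √i) = 16 * Δ * √k * (√2 ^ ℓ * √i) := by ring
    _ ≤ 16 * Δ * √k * (√2 * √k) := by gcongr
    _ = √2 * Δ * (16 * k) := by linear_combination 16 * √2 * Δ * hkk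

theorem sum_lower_half_sub_lt {k : ℕ} (hk : 2 ≤ k) {μ : ℕ → ℝ}
    (hmono : ∀ i ∈ Icc 1 k, ∀ j ∈ Icc 1 k, i ≤ j → μ i ≤ μ j) {Δ : ℝ} (hΔ : 0 ≤ Δ) {bar : ℝ}
    (hsmall : ∀ ℓ : ℕ, 1 ≤ ℓ → ℓ ≤ Nat.log 2 k → bar - μ (k / 2 ^ ℓ) < √2 ^ ℓ / 16 * (Δ / k)) :
    ∑ i ∈ Icc 1 (k / 2), (bar - μ i) < Δ / 8 := by
  set c := √2 * Δ / (16 * √k)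
  have hpointwise : ∀ i ∈ Icc 1 (k / 2), bar - μ i < c / √i := by
    intro i hi
    obtain ⟨hi1, hi2⟩ := mem_Icc.mp hi
    obtain ⟨ℓ, hℓ1, hℓk, hquant, hpow⟩ := Nat.exists_div_two_pow_le_and_two_pow_mul_le hi1 hi2
    have hq1 : 1 ≤ k / 2 ^ ℓ :=
      (Nat.one_le_div_iff (by positivity)).mpr ((Nat.pow_le_pow_right two_pos hℓk).trans
        (Nat.pow_log_le_self 2 (by omega)))
    have := hmono _ (mem_Icc.mpr ⟨hq1, Nat.div_le_self _ _⟩) i (mem_Icc.mpr ⟨hi1, by omega⟩) hquant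
    linarith [hsmall ℓ hℓ1 hℓk, sqrt_two_pow_div_le hΔ hi1 hpow]
  have hsqrt : √((k / 2 : ℕ) : ℝ) ≤ √k / √2 := by
    rw [← sqrt_div (Nat.cast_nonneg k)]
    exact sqrt_le_sqrt Nat.cast_div_le
  calc ∑ i ∈ Icc 1 (k / 2), (bar - μ i)
      < ∑ i ∈ Icc 1 (k / 2), c * (√i)⁻¹ :=
        sum_lt_sum_of_nonempty ⟨1, mem_Icc.mpr ⟨le_rfl, by omega⟩⟩ hpointwise
    _ = c * ∑ i ∈ Icc 1 (k / 2), (√i)⁻¹ := (mul_sum _ _ _).symm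
    _ ≤ c * (2 * (√k / √2)) := by
        gcongr
        exact (sum_Icc_inv_sqrt_le _).trans (by gcongr)
    _ = Δ / 8 := by
        have : 0 < √(k : ℝ) := sqrt_pos.mpr (by positivity)
        simp only [c]
        field_simp
        ring

theorem stmt11_general (k : ℕ) (hk : 2 ≤ k) (μ : ℕ → ℝ)
    (hmono : ∀ i ∈ Finset.Icc 1 k, ∀ j ∈ Finset.Icc 1 k, i ≤ j → μ i ≤ μ j)
    (Δ : ℝ) (hΔ : 0 < Δ)
    (bar : ℝ)
    (hsmall : ∀ ℓ : ℕ, 1 ≤ ℓ → ℓ ≤ Nat.log 2 k →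
      bar - μ (k / 2 ^ ℓ) < (Real.sqrt 2) ^ ℓ / 16 * (Δ / k)) :
    (∑ i ∈ Finset.Icc 1 (k / 2), (bar - μ i)
        < Δ / 8 + (Real.sqrt 2 + 1) * Δ / (16 * Real.sqrt k)) ∧
    Δ / 8 + (Real.sqrt 2 + 1) * Δ / (16 * Real.sqrt k) < 3 * Δ / 8 := by
  have hsum := sum_lower_half_sub_lt hk hmono hΔ.le hsmall
  have hsqrtk : 1 < √(k : ℝ) := lt_sqrt_of_sq_lt (by norm_cast)
  have hsqrt2 : √(2 : ℝ) < 3 := (sqrt_lt' three_pos).mpr (by norm_num)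
  have htail : (√2 + 1) * Δ / (16 * √k) < Δ / 4 := by
    rw [div_lt_iff₀ (by positivity)]
    nlinarith [mul_pos hΔ (sub_pos.mpr hsqrtk)]
  constructor <;> linarith [show 0 ≤ (√2 + 1) * Δ / (16 * √k) by positivity]

/-- Contradiction chain in the action-partitioning lemma: if all dyadic quantiles are
close to the average, the total deviation of the lower half is small. -/
theorem stmt11 (k : ℕ) (hk : 2 ≤ k) (μ : ℕ → ℝ)
    (hmono : ∀ i ∈ Finset.Icc 1 k, ∀ j ∈ Finset.Icc 1 k, i ≤ j → μ i ≤ μ j)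
    (Δ : ℝ) (hΔ : 0 < Δ)
    (bar : ℝ) (hbar : bar = (∑ i ∈ Finset.Icc 1 k, μ i) / k)
    (hsmall : ∀ ℓ : ℕ, 1 ≤ ℓ → ℓ ≤ Nat.log 2 k →
      bar - μ (k / 2 ^ ℓ) < (Real.sqrt 2) ^ ℓ / 16 * (Δ / k)) :
    (∑ i ∈ Finset.Icc 1 (k / 2), (bar - μ i)
        < Δ / 8 + (Real.sqrt 2 + 1) * Δ / (16 * Real.sqrt k)) ∧
    Δ / 8 + (Real.sqrt 2 + 1) * Δ / (16 * Real.sqrt k) < 3 * Δ / 8 :=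
  stmt11_general k hk μ hmono Δ hΔ bar hsmall
end
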